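/- arXiv:1312.3108 — 5 statements merged into one kernel-verified Lean document; each statement's English description precedes it below -/
import Mathlib

section
/- Let f(x) = Σ_{i=0}^{n} a_i x^i and g(x) = Σ_{j=0}^{m} b_j x^{kj} be integer polynomials, and suppose s is a positive integer with s·k > n. Then H(f·g) ≤ s·H(f)·H(g). -/
open Polynomial

noncomputable def Height (f : Polynomial ℤ) : ℕ :=
  f.support.sup fun i => (f.coeff i).natAbs

noncomputable def Tsum (f : Polynomial ℤ) : ℕ :=
  ∑ i ∈ f.support, (f.coeff i).natAbs

noncomputable def B (n : ℕ) : ℕ :=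
  sSup {h : ℕ | ∃ f : Polynomial ℤ, f ∣ X ^ n - 1 ∧ Height f = h}

/-!
The coefficient of `X ^ t` in `f * g` is `∑ f_i g_j` over `i + j = t`. A term can be nonzero
only if `i ≤ n` and `k ∣ j`, so `j` is a multiple of `k` in `[t - n, t]`; as `n < s * k` there
are at most `s` such `j`, and each term is bounded by `H(f) H(g)`.
-/

open Finset

theorem Finset.card_le_of_forall_lt_add {T : Finset ℕ} {s : ℕ}
    (h : ∀ x ∈ T, ∀ y ∈ T, y < x + s) : #T ≤ s := by
  rcases T.eq_empty_or_nonempty with rfl | hT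
  · simp
  · calc #T ≤ #(Ico (T.min' hT) (T.min' hT + s)) := card_le_card fun y hy =>
          mem_Ico.2 ⟨min'_le T y hy, h _ (min'_mem T hT) y hy⟩
      _ = s := by simp

theorem Polynomial.card_antidiagonal_coeff_mul_ne_zero_le {R : Type*} [Semiring R]
    [DecidableEq R] {f g : R[X]} {n k s : ℕ} (hf : f.natDegree ≤ n)
    (hg : ∀ j, g.coeff j ≠ 0 → k ∣ j) (hsk : n < s * k) (t : ℕ) :
    #{p ∈ antidiagonal t | f.coeff p.1 * g.coeff p.2 ≠ 0} ≤ s := by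
  set S := {p ∈ antidiagonal t | f.coeff p.1 * g.coeff p.2 ≠ 0}
  have hS : ∀ p ∈ S, p.1 + p.2 = t ∧ p.1 ≤ n ∧ k ∣ p.2 := by
    intro p hp
    obtain ⟨hpt, hp0⟩ := mem_filter.1 hp
    refine ⟨mem_antidiagonal.1 hpt, ?_, hg _ (right_ne_zero_of_mul hp0)⟩
    by_contra! hn
    exact left_ne_zero_of_mul hp0 (coeff_eq_zero_of_natDegree_lt (hf.trans_lt hn))
  have hinj : Set.InjOn (fun p : ℕ × ℕ => p.2 / k) S := by
    intro p hp q hq hpq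
    obtain ⟨hpt, -, hpk⟩ := hS p hp
    obtain ⟨hqt, -, hqk⟩ := hS q hq
    have h2 : p.2 = q.2 := (Nat.div_left_inj hpk hqk).1 hpq
    exact Prod.ext (by omega) h2
  rw [← card_image_of_injOn hinj]
  refine card_le_of_forall_lt_add ?_
  simp only [mem_image, forall_exists_index, and_imp, forall_apply_eq_imp_iff₂]
  intro p hp q hq
  obtain ⟨hpt, hpn, a, ha⟩ := hS p hp
  obtain ⟨hqt, -, b, hb⟩ := hS q hq
  have hk : 0 < k := Nat.pos_of_ne_zero (by rintro rfl; omega)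
  rw [ha, hb, Nat.mul_div_cancel_left _ hk, Nat.mul_div_cancel_left _ hk]
  refine Nat.lt_of_mul_lt_mul_left (a := k) ?_
  linarith [mul_add k a s, mul_comm k s]

namespace Height

theorem natAbs_coeff_le (f : ℤ[X]) (i : ℕ) : (f.coeff i).natAbs ≤ Height f := by
  by_cases h : f.coeff i = 0
  · simp [h]
  · exact le_sup (f := fun i => (f.coeff i).natAbs) (mem_support_iff.2 h)

variable {f g : ℤ[X]}

theorem natAbs_coeff_mul_le (t : ℕ) :
    ((f * g).coeff t).natAbs ≤
      #{p ∈ antidiagonal t | f.coeff p.1 * g.coeff p.2 ≠ 0} * (Height f * Height g) := by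
  rw [coeff_mul, ← sum_filter_ne_zero, ← smul_eq_mul]
  refine (Int.natAbs_sum_le _ _).trans (sum_le_card_nsmul _ _ _ fun p _ => ?_)
  rw [Int.natAbs_mul]
  exact Nat.mul_le_mul (natAbs_coeff_le f p.1) (natAbs_coeff_le g p.2)

theorem mul_le_of_natDegree_le_of_dvd {n k s : ℕ} (hf : f.natDegree ≤ n)
    (hg : ∀ j, g.coeff j ≠ 0 → k ∣ j) (hsk : n < s * k) :
    Height (f * g) ≤ s * Height f * Height g :=
  Finset.sup_le fun t _ => (natAbs_coeff_mul_le t).trans <| by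
    rw [mul_assoc]
    exact Nat.mul_le_mul_right _ (card_antidiagonal_coeff_mul_ne_zero_le hf hg hsk t)

end Height

theorem stmt_5_general (n m k s : ℕ) (a b : ℕ → ℤ) (hsk : n < s * k)
    (f g : Polynomial ℤ)
    (hf : f = ∑ i ∈ Finset.range (n + 1), C (a i) * X ^ i)
    (hg : g = ∑ j ∈ Finset.range (m + 1), C (b j) * X ^ (k * j)) :
    Height (f * g) ≤ s * Height f * Height g := by
  refine Height.mul_le_of_natDegree_le_of_dvd (n := n) ?_ ?_ hsk
  · subst hf
    exact natDegree_sum_le_of_forall_le _ _ fun i hi =>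
      natDegree_C_mul_X_pow_le _ _ |>.trans (Nat.lt_succ_iff.1 (mem_range.1 hi))
  · intro j hj
    subst hg
    simp only [finsetSum_coeff, coeff_C_mul_X_pow] at hj
    obtain ⟨i, -, hi⟩ := exists_ne_zero_of_sum_ne_zero hj
    exact ⟨i, by_contra fun h => hi (if_neg h)⟩

theorem stmt_5 (n m k s : ℕ) (a b : ℕ → ℤ) (hs : 0 < s) (hsk : n < s * k)
    (f g : Polynomial ℤ)
    (hf : f = ∑ i ∈ Finset.range (n + 1), C (a i) * X ^ i)
    (hg : g = ∑ j ∈ Finset.range (m + 1), C (b j) * X ^ (k * j)) :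
    Height (f * g) ≤ s * Height f * Height g :=
  stmt_5_general n m k s a b hsk f g hf hg
end

section
/- Let p and q be distinct primes and let ρ, σ be the unique nonnegative integers with ρp + σq = (p−1)(q−1). Writing Φ_{pq}(x) = Σ a_k x^k, one has a_k = 1 if and only if k = ip + jq for some integers 0 ≤ i ≤ ρ and 0 ≤ j ≤ σ; a_k = −1 if and only if k + pq = ip + jq for some ρ+1 ≤ i ≤ q−1 and σ+1 ≤ j ≤ p−1; and a_k = 0 otherwise. -/
open Polynomial

lemma my_uniq {p q : ℕ} (hcop : Nat.Coprime p q) {i i' j j' : ℕ} (hi : i < q) (hi' : i' < q)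
    (e : i * p + j * q = i' * p + j' * q) : i = i' ∧ j = j' := by
  have hq0 : 0 < q := Nat.pos_of_ne_zero (by omega)
  have m : i * p % q = i' * p % q := by
    have := congrArg (· % q) e
    simpa [Nat.add_mul_mod_self_right] using this
  have hii : i = i' := by
    have : i % q = i' % q := Nat.ModEq.cancel_right_of_coprime (by simpa [Nat.Coprime] using hcop.symm) m
    rwa [Nat.mod_eq_of_lt hi, Nat.mod_eq_of_lt hi'] at this
  subst hii
  have : j * q = j' * q := by omega
  exact ⟨rfl, Nat.eq_of_mul_eq_mul_right hq0 this⟩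

lemma my_cyc_mul (p q : ℕ) (hp : p.Prime) (hq : q.Prime) (hpq : p ≠ q) :
    cyclotomic (p * q) ℤ * ((X ^ p - 1) * (X ^ q - 1)) = (X ^ (p * q) - 1) * (X - 1) := by
  haveI : Fact p.Prime := ⟨hp⟩
  haveI : Fact q.Prime := ⟨hq⟩
  have hdvd : ¬ p ∣ q := fun hd => hpq ((Nat.prime_dvd_prime_iff_eq hp hq).mp hd)
  have h1 := cyclotomic_expand_eq_cyclotomic_mul hp hdvd (R := ℤ)
  have h2 : (cyclotomic q ℤ) * (X - 1) = X ^ q - 1 := cyclotomic_prime_mul_X_sub_one ℤ q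
  have h3 : (expand ℤ p) (cyclotomic q ℤ) * (X ^ p - 1) = X ^ (p * q) - 1 := by
    have := congrArg (expand ℤ p) h2
    rw [map_mul, map_sub, map_sub, map_one, expand_X, map_pow, expand_X, ← pow_mul] at this
    rw [this, mul_comm p q, pow_mul]
  calc cyclotomic (p * q) ℤ * ((X ^ p - 1) * (X ^ q - 1))
      = (cyclotomic (q * p) ℤ * cyclotomic q ℤ) * (X ^ p - 1) * (X - 1) := by
        rw [mul_comm p q, ← h2]; ring
    _ = (X ^ (p * q) - 1) * (X - 1) := by rw [← h1, h3]

theorem stmt_7 (p q : ℕ) (hp : p.Prime) (hq : q.Prime) (hpq : p ≠ q)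
    (ρ σ : ℕ) (h : ρ * p + σ * q = (p - 1) * (q - 1)) (k : ℕ) :
    ((cyclotomic (p * q) ℤ).coeff k = 1 ↔
      ∃ i ≤ ρ, ∃ j ≤ σ, k = i * p + j * q) ∧
    ((cyclotomic (p * q) ℤ).coeff k = -1 ↔
      ∃ i, ρ + 1 ≤ i ∧ i ≤ q - 1 ∧ ∃ j, σ + 1 ≤ j ∧ j ≤ p - 1 ∧
        k + p * q = i * p + j * q) ∧
    (¬ (∃ i ≤ ρ, ∃ j ≤ σ, k = i * p + j * q) →
     ¬ (∃ i, ρ + 1 ≤ i ∧ i ≤ q - 1 ∧ ∃ j, σ + 1 ≤ j ∧ j ≤ p - 1 ∧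
          k + p * q = i * p + j * q) →
     (cyclotomic (p * q) ℤ).coeff k = 0) := by
  have hp2 := hp.two_le
  have hq2 := hq.two_le
  have hcop : Nat.Coprime p q := (Nat.coprime_primes hp hq).mpr hpq
  have e0 : (p - 1) * (q - 1) + p + q = p * q + 1 := by
    zify [hp.one_le, hq.one_le]; ring
  have key : (ρ + 1) * p + (σ + 1) * q = p * q + 1 := by
    calc (ρ + 1) * p + (σ + 1) * q = (ρ * p + σ * q) + p + q := by ring
      _ = (p - 1) * (q - 1) + p + q := by rw [h]
      _ = p * q + 1 := e0
  have hρq : ρ < q := by nlinarith [key]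
  have hσp : σ < p := by nlinarith [key]
  -- the two sums
  set T1 : Finset (ℕ × ℕ) := (Finset.range (ρ + 1)) ×ˢ (Finset.range (σ + 1)) with hT1
  set T2 : Finset (ℕ × ℕ) := (Finset.Icc (ρ + 1) (q - 1)) ×ˢ (Finset.Icc (σ + 1) (p - 1)) with hT2
  set P1 : ℤ[X] := ∑ x ∈ T1, X ^ (x.1 * p + x.2 * q) with hP1def
  set P2 : ℤ[X] := ∑ x ∈ T2, X ^ (x.1 * p + x.2 * q - p * q) with hP2def
  -- lower bound on exponents in T2
  have hT2ge : ∀ x ∈ T2, p * q + 1 ≤ x.1 * p + x.2 * q := by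
    rintro ⟨a, b⟩ hx
    rw [hT2, Finset.mem_product, Finset.mem_Icc, Finset.mem_Icc] at hx
    calc p * q + 1 = (ρ + 1) * p + (σ + 1) * q := key.symm
      _ ≤ a * p + b * q := Nat.add_le_add (Nat.mul_le_mul_right p hx.1.1) (Nat.mul_le_mul_right q hx.2.1)
  -- the main identity: cyclotomic (p*q) = P1 - P2
  have e1 : P1 = (∑ i ∈ Finset.range (ρ + 1), ((X : ℤ[X]) ^ p) ^ i) *
      (∑ j ∈ Finset.range (σ + 1), ((X : ℤ[X]) ^ q) ^ j) := by
    rw [Finset.sum_mul_sum, hP1def, hT1, Finset.sum_product]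
    exact Finset.sum_congr rfl fun i _ => Finset.sum_congr rfl fun j _ => by
      rw [← pow_mul, ← pow_mul, ← pow_add, mul_comm p i, mul_comm q j]
  have e2 : P2 * X ^ (p * q) = (∑ i ∈ Finset.Icc (ρ + 1) (q - 1), ((X : ℤ[X]) ^ p) ^ i) *
      (∑ j ∈ Finset.Icc (σ + 1) (p - 1), ((X : ℤ[X]) ^ q) ^ j) := by
    rw [Finset.sum_mul_sum, hP2def, Finset.sum_mul, hT2, Finset.sum_product]
    refine Finset.sum_congr rfl fun i hi => Finset.sum_congr rfl fun j hj => ?_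
    have hge : p * q + 1 ≤ i * p + j * q := by
      calc p * q + 1 = (ρ + 1) * p + (σ + 1) * q := key.symm
        _ ≤ i * p + j * q := Nat.add_le_add
            (Nat.mul_le_mul_right p (Finset.mem_Icc.mp hi).1)
            (Nat.mul_le_mul_right q (Finset.mem_Icc.mp hj).1)
    show X ^ (i * p + j * q - p * q) * X ^ (p * q) = (X ^ p) ^ i * (X ^ q) ^ j
    rw [← pow_add, ← pow_mul, ← pow_mul, ← pow_add, mul_comm p i, mul_comm q j]
    congr 1
    omega
  have geom : ∀ (n : ℕ) (y : ℤ[X]), (∑ i ∈ Finset.range n, y ^ i) * (y - 1) = y ^ n - 1 :=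
    fun n y => geom_sum_mul y n
  have hC : (∑ i ∈ Finset.Icc (ρ + 1) (q - 1), ((X : ℤ[X]) ^ p) ^ i) * (X ^ p - 1)
      = (X : ℤ[X]) ^ (p * q) - ((X : ℤ[X]) ^ p) ^ (ρ + 1) := by
    have hicc : Finset.Icc (ρ + 1) (q - 1) = Finset.Ico (ρ + 1) q := by
      rw [← Finset.Ico_add_one_right_eq_Icc]
      congr 1
      omega
    rw [hicc, Finset.sum_Ico_eq_sub _ (by omega : ρ + 1 ≤ q), sub_mul, geom, geom]
    ring
  have hD : (∑ j ∈ Finset.Icc (σ + 1) (p - 1), ((X : ℤ[X]) ^ q) ^ j) * (X ^ q - 1)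
      = (X : ℤ[X]) ^ (p * q) - ((X : ℤ[X]) ^ q) ^ (σ + 1) := by
    have hicc : Finset.Icc (σ + 1) (p - 1) = Finset.Ico (σ + 1) p := by
      rw [← Finset.Ico_add_one_right_eq_Icc]
      congr 1
      omega
    rw [hicc, Finset.sum_Ico_eq_sub _ (by omega : σ + 1 ≤ p), sub_mul, geom, geom]
    ring
  have hab : ((X : ℤ[X]) ^ p) ^ (ρ + 1) * ((X : ℤ[X]) ^ q) ^ (σ + 1) = X ^ (p * q) * X := by
    rw [← pow_mul, ← pow_mul, ← pow_add, mul_comm p (ρ + 1), mul_comm q (σ + 1), key, pow_succ]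
  have hMne : ((X ^ p - 1) * (X ^ q - 1) * X ^ (p * q) : ℤ[X]) ≠ 0 := by
    have h1 : ((X : ℤ[X]) ^ p - 1) ≠ 0 := by
      have := X_pow_sub_C_ne_zero (by omega : 0 < p) (1 : ℤ)
      simpa using this
    have h2 : ((X : ℤ[X]) ^ q - 1) ≠ 0 := by
      have := X_pow_sub_C_ne_zero (by omega : 0 < q) (1 : ℤ)
      simpa using this
    exact mul_ne_zero (mul_ne_zero h1 h2) (pow_ne_zero _ X_ne_zero)
  have hmain : cyclotomic (p * q) ℤ = P1 - P2 := by
    refine mul_right_cancel₀ hMne ?_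
    have lhs : cyclotomic (p * q) ℤ * ((X ^ p - 1) * (X ^ q - 1) * X ^ (p * q))
        = (X ^ (p * q) - 1) * (X - 1) * X ^ (p * q) := by
      rw [← mul_assoc, my_cyc_mul p q hp hq hpq]
    rw [lhs]
    have rhs : (P1 - P2) * ((X ^ p - 1) * (X ^ q - 1) * X ^ (p * q))
        = (((X : ℤ[X]) ^ p) ^ (ρ + 1) - 1) * (((X : ℤ[X]) ^ q) ^ (σ + 1) - 1) * X ^ (p * q)
          - ((X : ℤ[X]) ^ (p * q) - ((X : ℤ[X]) ^ p) ^ (ρ + 1)) *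
            ((X : ℤ[X]) ^ (p * q) - ((X : ℤ[X]) ^ q) ^ (σ + 1)) := by
      have hP1M : P1 * ((X ^ p - 1) * (X ^ q - 1))
          = (((X : ℤ[X]) ^ p) ^ (ρ + 1) - 1) * (((X : ℤ[X]) ^ q) ^ (σ + 1) - 1) := by
        rw [e1, mul_mul_mul_comm, geom, geom]
      have hP2M : P2 * X ^ (p * q) * ((X ^ p - 1) * (X ^ q - 1))
          = ((X : ℤ[X]) ^ (p * q) - ((X : ℤ[X]) ^ p) ^ (ρ + 1)) *
            ((X : ℤ[X]) ^ (p * q) - ((X : ℤ[X]) ^ q) ^ (σ + 1)) := by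
        rw [e2, mul_mul_mul_comm, hC, hD]
      calc (P1 - P2) * ((X ^ p - 1) * (X ^ q - 1) * X ^ (p * q))
          = P1 * ((X ^ p - 1) * (X ^ q - 1)) * X ^ (p * q)
            - P2 * X ^ (p * q) * ((X ^ p - 1) * (X ^ q - 1)) := by ring
        _ = _ := by rw [hP1M, hP2M]
    rw [rhs]
    linear_combination (1 - X ^ (p * q) : ℤ[X]) * hab
  -- coefficient extraction
  have hc1 : P1.coeff k = ∑ x ∈ T1, if k = x.1 * p + x.2 * q then (1 : ℤ) else 0 := by
    rw [hP1def, finset_sum_coeff]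
    exact Finset.sum_congr rfl fun x _ => coeff_X_pow _ _
  have hc2 : P2.coeff k = ∑ x ∈ T2, if k + p * q = x.1 * p + x.2 * q then (1 : ℤ) else 0 := by
    rw [hP2def, finset_sum_coeff]
    refine Finset.sum_congr rfl fun x hx => ?_
    rw [coeff_X_pow]
    have := hT2ge x hx
    congr 1
    simp only [eq_iff_iff]
    omega
  have coeffΦ : (cyclotomic (p * q) ℤ).coeff k = P1.coeff k - P2.coeff k := by
    rw [hmain, coeff_sub]
  -- evaluating the indicator sums
  have val1 : (∃ i ≤ ρ, ∃ j ≤ σ, k = i * p + j * q) → P1.coeff k = 1 := by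
    rintro ⟨i, hi, j, hj, hk⟩
    rw [hc1, Finset.sum_eq_single_of_mem (i, j)
      (by rw [hT1, Finset.mem_product]; exact ⟨Finset.mem_range.mpr (by omega),
        Finset.mem_range.mpr (by omega)⟩)]
    · simp [hk]
    · rintro ⟨a, b⟩ hab2 hne
      rw [hT1, Finset.mem_product, Finset.mem_range, Finset.mem_range] at hab2
      rw [if_neg]
      intro heq
      have := my_uniq hcop (by omega : a < q) (by omega : i < q) (heq.symm.trans hk)
      exact hne (Prod.ext this.1 this.2)
  have val1' : (¬ ∃ i ≤ ρ, ∃ j ≤ σ, k = i * p + j * q) → P1.coeff k = 0 := by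
    intro hn
    rw [hc1]
    refine Finset.sum_eq_zero fun x hx => ?_
    rw [hT1, Finset.mem_product, Finset.mem_range, Finset.mem_range] at hx
    rw [if_neg]
    intro heq
    exact hn ⟨x.1, by omega, x.2, by omega, heq⟩
  have val2 : (∃ i, ρ + 1 ≤ i ∧ i ≤ q - 1 ∧ ∃ j, σ + 1 ≤ j ∧ j ≤ p - 1 ∧
      k + p * q = i * p + j * q) → P2.coeff k = 1 := by
    rintro ⟨i, hi1, hi2, j, hj1, hj2, hk⟩
    rw [hc2, Finset.sum_eq_single_of_mem (i, j)
      (by rw [hT2, Finset.mem_product]; exact ⟨Finset.mem_Icc.mpr ⟨hi1, hi2⟩,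
        Finset.mem_Icc.mpr ⟨hj1, hj2⟩⟩)]
    · simp [hk]
    · rintro ⟨a, b⟩ hab2 hne
      rw [hT2, Finset.mem_product, Finset.mem_Icc, Finset.mem_Icc] at hab2
      rw [if_neg]
      intro heq
      have := my_uniq hcop (by omega : a < q) (by omega : i < q) (heq.symm.trans hk)
      exact hne (Prod.ext this.1 this.2)
  have val2' : (¬ ∃ i, ρ + 1 ≤ i ∧ i ≤ q - 1 ∧ ∃ j, σ + 1 ≤ j ∧ j ≤ p - 1 ∧
      k + p * q = i * p + j * q) → P2.coeff k = 0 := by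
    intro hn
    rw [hc2]
    refine Finset.sum_eq_zero fun x hx => ?_
    rw [hT2, Finset.mem_product, Finset.mem_Icc, Finset.mem_Icc] at hx
    rw [if_neg]
    intro heq
    exact hn ⟨x.1, hx.1.1, hx.1.2, x.2, hx.2.1, hx.2.2, heq⟩
  -- disjointness
  have disj : (∃ i ≤ ρ, ∃ j ≤ σ, k = i * p + j * q) →
      (∃ i, ρ + 1 ≤ i ∧ i ≤ q - 1 ∧ ∃ j, σ + 1 ≤ j ∧ j ≤ p - 1 ∧
        k + p * q = i * p + j * q) → False := by
    rintro ⟨i, hi, j, hj, hk⟩ ⟨i', hi1', hi2', j', hj1', hj2', hk'⟩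
    have e : i * p + (j + p) * q = i' * p + j' * q := by
      have : (j + p) * q = j * q + p * q := by ring
      rw [this]
      have hpqc : p * q = q * p := mul_comm p q
      linarith [hk, hk']
    have := my_uniq hcop (by omega : i < q) (by omega : i' < q) e
    omega
  -- conclude
  by_cases r1 : ∃ i ≤ ρ, ∃ j ≤ σ, k = i * p + j * q
  · have r2 : ¬ ∃ i, ρ + 1 ≤ i ∧ i ≤ q - 1 ∧ ∃ j, σ + 1 ≤ j ∧ j ≤ p - 1 ∧
        k + p * q = i * p + j * q := fun hr2 => disj r1 hr2
    have hval : (cyclotomic (p * q) ℤ).coeff k = 1 := by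
      rw [coeffΦ, val1 r1, val2' r2]; ring
    refine ⟨⟨fun _ => r1, fun _ => hval⟩,
      ⟨fun hc => absurd (hval ▸ hc) (by norm_num), fun hr2 => absurd hr2 r2⟩,
      fun hn1 _ => absurd r1 hn1⟩
  · by_cases r2 : ∃ i, ρ + 1 ≤ i ∧ i ≤ q - 1 ∧ ∃ j, σ + 1 ≤ j ∧ j ≤ p - 1 ∧
        k + p * q = i * p + j * q
    · have hval : (cyclotomic (p * q) ℤ).coeff k = -1 := by
        rw [coeffΦ, val1' r1, val2 r2]; ring
      refine ⟨⟨fun hc => absurd (hval ▸ hc) (by norm_num), fun hr1 => absurd hr1 r1⟩,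
        ⟨fun _ => r2, fun _ => hval⟩, fun _ hn2 => absurd r2 hn2⟩
    · have hval : (cyclotomic (p * q) ℤ).coeff k = 0 := by
        rw [coeffΦ, val1' r1, val2' r2]; ring
      refine ⟨⟨fun hc => absurd (hval ▸ hc) (by norm_num), fun hr1 => absurd hr1 r1⟩,
        ⟨fun hc => absurd (hval ▸ hc) (by norm_num), fun hr2 => absurd hr2 r2⟩,
        fun _ _ => hval⟩
end

section
/- Let p and q be distinct primes, let ρ, σ be the unique nonnegative integers with ρp + σq = (p−1)(q−1), and let f(x) = Σ_{s=0}^{n} a_s x^{qs} be an integer polynomial supported on multiples of q. Then H(Φ_{pq}(x)·f(x)) ≤ max{σ+1, p−(σ+1)}·H(f). -/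
open Polynomial

/-!
With `p * (ρ + 1) + q * (σ + 1) = p * q + 1` (Lam–Leung),
`Φ_{pq} = ∑_{i ≤ ρ, j ≤ σ} x^{pi+qj} - ∑_{ρ < i < q, σ < j < p} x^{pi+qj-pq}`.
Grouping by `i`, `Φ_{pq} f = ∑_{i < q} F_i`, where `F_i` is a sum of `σ + 1` (for `i ≤ ρ`) or
`p - (σ + 1)` (for `i > ρ`) shifted copies of `± f`, so `H(F_i) ≤ max (σ + 1) (p - (σ + 1)) H(f)`.
As `f` is supported on multiples of `q`, `F_i` is supported on exponents `≡ p i (mod q)`; these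
classes are distinct for `i < q`, so every coefficient of `Φ_{pq} f` is a coefficient of one `F_i`.
-/

open Finset

theorem natAbs_coeff_le_height (f : ℤ[X]) (m : ℕ) : (f.coeff m).natAbs ≤ Height f := by
  by_cases h : f.coeff m = 0
  · simp [h]
  · exact le_sup (f := fun i => (f.coeff i).natAbs) (mem_support_iff.mpr h)

theorem height_le_iff {f : ℤ[X]} {M : ℕ} : Height f ≤ M ↔ ∀ m, (f.coeff m).natAbs ≤ M :=
  ⟨fun h m => (natAbs_coeff_le_height f m).trans h, fun h => Finset.sup_le fun m _ => h m⟩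

@[simp]
theorem height_zero : Height 0 = 0 := by
  simp [Height]

@[simp]
theorem height_neg (f : ℤ[X]) : Height (-f) = Height f := by
  simp [Height]

theorem height_add_le (f g : ℤ[X]) : Height (f + g) ≤ Height f + Height g :=
  height_le_iff.mpr fun m => by
    rw [coeff_add]
    exact (Int.natAbs_add_le _ _).trans
      (add_le_add (natAbs_coeff_le_height f m) (natAbs_coeff_le_height g m))

theorem height_X_pow_mul_le (k : ℕ) (f : ℤ[X]) : Height (X ^ k * f) ≤ Height f :=
  height_le_iff.mpr fun m => by
    rw [coeff_X_pow_mul']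
    split_ifs
    · exact natAbs_coeff_le_height f _
    · simp

theorem height_sum_X_pow_mul_le {ι : Type*} (s : Finset ι) (k : ι → ℕ) (f : ℤ[X]) :
    Height ((∑ j ∈ s, X ^ k j) * f) ≤ #s * Height f := by
  rw [sum_mul]
  calc Height (∑ j ∈ s, X ^ k j * f)
      ≤ ∑ j ∈ s, Height (X ^ k j * f) := le_sum_of_subadditive _ height_zero.le height_add_le _ _
    _ ≤ ∑ _j ∈ s, Height f := sum_le_sum fun j _ => height_X_pow_mul_le _ _
    _ = #s * Height f := by rw [sum_const, smul_eq_mul]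

def SupportedInClass (q : ℕ) (r : ZMod q) (f : ℤ[X]) : Prop :=
  ∀ m ∈ f.support, (m : ZMod q) = r

namespace SupportedInClass

variable {q : ℕ} {r s : ZMod q} {f g : ℤ[X]}

theorem zero : SupportedInClass q r 0 := by
  simp [SupportedInClass]

theorem neg (hf : SupportedInClass q r f) : SupportedInClass q r (-f) := by
  simpa [SupportedInClass] using hf

theorem add (hf : SupportedInClass q r f) (hg : SupportedInClass q r g) :
    SupportedInClass q r (f + g) := fun m hm => by
  rcases Finset.mem_union.mp (support_add hm) with h | h
  exacts [hf m h, hg m h]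

theorem sum {ι : Type*} {t : Finset ι} {F : ι → ℤ[X]} (hF : ∀ i ∈ t, SupportedInClass q r (F i)) :
    SupportedInClass q r (∑ i ∈ t, F i) :=
  Finset.sum_induction F _ (fun _ _ => add) zero hF

theorem mul (hf : SupportedInClass q r f) (hg : SupportedInClass q s g) :
    SupportedInClass q (r + s) (f * g) := fun m hm => by
  rw [mem_support_iff, coeff_mul] at hm
  obtain ⟨⟨i, j⟩, hij, hne⟩ := exists_ne_zero_of_sum_ne_zero hm
  rw [← mem_antidiagonal.mp hij, Nat.cast_add,
    hf i (mem_support_iff.mpr (left_ne_zero_of_mul hne)),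
    hg j (mem_support_iff.mpr (right_ne_zero_of_mul hne))]

theorem X_pow (k : ℕ) : SupportedInClass q k (X ^ k : ℤ[X]) := fun m hm => by
  rw [support_X_pow, Finset.mem_singleton] at hm
  rw [hm]

theorem C (a : ℤ) : SupportedInClass q 0 (Polynomial.C a) := fun m hm => by
  rw [Finset.mem_singleton.mp (support_C_subset a hm), Nat.cast_zero]

theorem of_eq (hf : SupportedInClass q r f) (h : r = s) : SupportedInClass q s f :=
  h ▸ hf

theorem sum_X_pow {ι : Type*} {t : Finset ι} {k : ι → ℕ}
    (hk : ∀ j ∈ t, (k j : ZMod q) = r) : SupportedInClass q r (∑ j ∈ t, X ^ k j) :=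
  sum fun j hj => (X_pow _).of_eq (hk j hj)

end SupportedInClass

theorem height_sum_le_of_supportedInClass {q : ℕ} {ι : Type*} (t : Finset ι) (F : ι → ℤ[X])
    (r : ι → ZMod q) (hr : Set.InjOn r t) (hF : ∀ i ∈ t, SupportedInClass q (r i) (F i))
    {M : ℕ} (hM : ∀ i ∈ t, Height (F i) ≤ M) : Height (∑ i ∈ t, F i) ≤ M := by
  refine height_le_iff.mpr fun m => ?_
  rw [finsetSum_coeff]
  by_cases h : ∃ i ∈ t, (F i).coeff m ≠ 0
  · obtain ⟨i, hi, hne⟩ := h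
    rw [sum_eq_single_of_mem i hi fun j hj hji => by_contra fun hne' => hji <| hr hj hi <|
      (hF j hj m (mem_support_iff.mpr hne')).symm.trans (hF i hi m (mem_support_iff.mpr hne))]
    exact (natAbs_coeff_le_height _ m).trans (hM i hi)
  · push Not at h
    rw [sum_eq_zero h]
    exact Nat.zero_le M

theorem injOn_natCast_mul {p q : ℕ} (hpq : p.Coprime q) :
    Set.InjOn (fun i : ℕ => ((p * i : ℕ) : ZMod q)) (range q) := by
  intro i hi j hj hij
  have hunit : IsUnit (p : ZMod q) := (ZMod.unitOfCoprime p hpq).isUnit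
  simp only [Nat.cast_mul] at hij
  have := hunit.mul_left_cancel hij
  rwa [ZMod.natCast_eq_natCast_iff', Nat.mod_eq_of_lt (mem_range.mp hi),
    Nat.mod_eq_of_lt (mem_range.mp hj)] at this

theorem cyclotomic_mul_prime_mul_X_pow_sub_one_mul {p q : ℕ} (hp : p.Prime) (hq : q.Prime)
    (hpq : p ≠ q) :
    cyclotomic (p * q) ℤ * ((X ^ p - 1) * (X ^ q - 1)) = (X ^ (p * q) - 1) * (X - 1) := by
  have := Fact.mk hq
  have hexpand := cyclotomic_expand_eq_cyclotomic_mul hp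
    (fun h => hpq ((Nat.prime_dvd_prime_iff_eq hp hq).mp h)) ℤ
  have hq' : cyclotomic q ℤ * (X - 1) = X ^ q - 1 := cyclotomic_prime_mul_X_sub_one ℤ q
  have hqp : expand ℤ p (cyclotomic q ℤ) * (X ^ p - 1) = (X ^ p) ^ q - 1 := by
    simpa using congrArg (expand ℤ p) hq'
  rw [hexpand, mul_comm q p, ← pow_mul] at hqp
  linear_combination (X - 1) * hqp - cyclotomic (p * q) ℤ * (X ^ p - 1) * hq'

noncomputable def lamLeung (p q ρ σ : ℕ) : ℤ[X] :=
  ∑ i ∈ range (ρ + 1), ∑ j ∈ range (σ + 1), X ^ (p * i + q * j)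
    - ∑ i ∈ Ico (ρ + 1) q, ∑ j ∈ Ico (σ + 1) p, X ^ (p * i + q * j - p * q)

section LamLeung

variable {p q ρ σ : ℕ}

theorem mul_le_mul_add_mul_of_lamLeung (hu : p * (ρ + 1) + q * (σ + 1) = p * q + 1) {i j : ℕ}
    (hi : ρ + 1 ≤ i) (hj : σ + 1 ≤ j) : p * q ≤ p * i + q * j := by
  nlinarith

theorem X_pow_mul_sum_sum_X_pow_sub (hu : p * (ρ + 1) + q * (σ + 1) = p * q + 1) :
    X ^ (p * q) * ∑ i ∈ Ico (ρ + 1) q, ∑ j ∈ Ico (σ + 1) p, (X ^ (p * i + q * j - p * q) : ℤ[X])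
      = (∑ i ∈ Ico (ρ + 1) q, (X ^ p) ^ i) * ∑ j ∈ Ico (σ + 1) p, (X ^ q) ^ j := by
  rw [mul_sum, sum_mul_sum]
  refine sum_congr rfl fun i hi => ?_
  rw [mul_sum]
  refine sum_congr rfl fun j hj => ?_
  rw [← pow_mul, ← pow_mul, ← pow_add, ← pow_add, Nat.add_sub_cancel' <|
    mul_le_mul_add_mul_of_lamLeung hu (mem_Ico.mp hi).1 (mem_Ico.mp hj).1]

theorem lamLeung_mul_X_pow_sub_one_mul (hu : p * (ρ + 1) + q * (σ + 1) = p * q + 1)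
    (hρ : ρ + 1 ≤ q) (hσ : σ + 1 ≤ p) :
    X ^ (p * q) * lamLeung p q ρ σ * ((X ^ p - 1) * (X ^ q - 1))
      = X ^ (p * q) * ((X ^ (p * q) - 1) * (X - 1)) := by
  have hA := geom_sum_mul (X ^ p : ℤ[X]) (ρ + 1)
  have hB := geom_sum_mul (X ^ q : ℤ[X]) (σ + 1)
  have hA' := geom_sum_Ico_mul (X ^ p : ℤ[X]) hρ
  have hB' := geom_sum_Ico_mul (X ^ q : ℤ[X]) hσ
  have hX : (X ^ p : ℤ[X]) ^ (ρ + 1) * (X ^ q) ^ (σ + 1) = X ^ (p * q) * X := by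
    rw [← pow_mul, ← pow_mul, ← pow_add, hu, pow_succ]
  have hfirst : ∑ i ∈ range (ρ + 1), ∑ j ∈ range (σ + 1), (X ^ (p * i + q * j) : ℤ[X])
      = (∑ i ∈ range (ρ + 1), (X ^ p) ^ i) * ∑ j ∈ range (σ + 1), (X ^ q) ^ j := by
    simp only [sum_mul_sum, pow_add, pow_mul]
  rw [← pow_mul] at hA' hB'
  rw [mul_comm q p] at hB'
  rw [lamLeung, mul_sub, X_pow_mul_sum_sum_X_pow_sub hu, hfirst]
  -- with `N = X^{pq}`, `u = X^{p(ρ+1)}`, `v = X^{q(σ+1)}`: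
  -- `N (u - 1) (v - 1) - (N - u) (N - v) = (N - 1) (u v - N) = N (N - 1) (X - 1)` as `u v = N X`
  linear_combination X ^ (p * q) * (∑ j ∈ range (σ + 1), (X ^ q) ^ j) * (X ^ q - 1) * hA
    + X ^ (p * q) * ((X ^ p) ^ (ρ + 1) - 1) * hB
    - (∑ j ∈ Ico (σ + 1) p, (X ^ q) ^ j) * (X ^ q - 1) * hA'
    - (X ^ (p * q) - (X ^ p) ^ (ρ + 1)) * hB' + (X ^ (p * q) - 1) * hX

theorem cyclotomic_eq_lamLeung (hp : p.Prime) (hq : q.Prime) (hpq : p ≠ q)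
    (hu : p * (ρ + 1) + q * (σ + 1) = p * q + 1) (hρ : ρ + 1 ≤ q) (hσ : σ + 1 ≤ p) :
    cyclotomic (p * q) ℤ = lamLeung p q ρ σ := by
  have hX : ∀ {n : ℕ}, 0 < n → (X ^ n - 1 : ℤ[X]) ≠ 0 := fun hn => by
    simpa using X_pow_sub_C_ne_zero hn (1 : ℤ)
  refine mul_left_cancel₀ (pow_ne_zero (p * q) X_ne_zero) <|
    mul_right_cancel₀ (mul_ne_zero (hX hp.pos) (hX hq.pos)) ?_
  rw [lamLeung_mul_X_pow_sub_one_mul hu hρ hσ, mul_assoc,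
    cyclotomic_mul_prime_mul_X_pow_sub_one_mul hp hq hpq]

theorem height_lamLeung_mul_le (hpq : p.Coprime q) (hu : p * (ρ + 1) + q * (σ + 1) = p * q + 1)
    (hρ : ρ + 1 ≤ q) {f : ℤ[X]} (hf : SupportedInClass q 0 f) :
    Height (lamLeung p q ρ σ * f) ≤ max (σ + 1) (p - (σ + 1)) * Height f := by
  set F : ℕ → ℤ[X] := fun i => if i < ρ + 1 then (∑ j ∈ range (σ + 1), X ^ (p * i + q * j)) * f
    else -((∑ j ∈ Ico (σ + 1) p, X ^ (p * i + q * j - p * q)) * f)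
  have hsum : lamLeung p q ρ σ * f = ∑ i ∈ range q, F i := by
    rw [← sum_range_add_sum_Ico _ hρ, lamLeung, sub_mul, sum_mul, sum_mul, sub_eq_add_neg,
      ← sum_neg_distrib]
    congr 1 <;> refine sum_congr rfl fun i hi => ?_
    exacts [(if_pos (mem_range.mp hi)).symm, (if_neg (not_lt.mpr (mem_Ico.mp hi).1)).symm]
  rw [hsum]
  refine height_sum_le_of_supportedInClass _ F _ (injOn_natCast_mul hpq) (fun i _ => ?_)
    (fun i _ => ?_)
  · simp only [F]
    split_ifs with hi
    · simpa using (SupportedInClass.sum_X_pow fun j _ => by simp).mul hf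
    · refine (SupportedInClass.mul (SupportedInClass.sum_X_pow fun j hj => ?_) hf).neg.of_eq
        (add_zero _)
      rw [Nat.cast_sub (mul_le_mul_add_mul_of_lamLeung hu (not_lt.mp hi) (mem_Ico.mp hj).1)]
      simp
  · simp only [F]
    split_ifs
    · exact (height_sum_X_pow_mul_le _ _ f).trans <| by
        rw [card_range]; exact Nat.mul_le_mul_right _ (le_max_left _ _)
    · rw [height_neg]
      exact (height_sum_X_pow_mul_le _ _ f).trans <| by
        rw [Nat.card_Ico]; exact Nat.mul_le_mul_right _ (le_max_right _ _)

end LamLeung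

theorem stmt_8 (p q : ℕ) (hp : p.Prime) (hq : q.Prime) (hpq : p ≠ q)
    (ρ σ : ℕ) (h : ρ * p + σ * q = (p - 1) * (q - 1))
    (n : ℕ) (a : ℕ → ℤ) (f : Polynomial ℤ)
    (hf : f = ∑ s ∈ Finset.range (n + 1), C (a s) * X ^ (q * s)) :
    Height (cyclotomic (p * q) ℤ * f) ≤ max (σ + 1) (p - (σ + 1)) * Height f := by
  have hu : p * (ρ + 1) + q * (σ + 1) = p * q + 1 := by
    zify [hp.one_le, hq.one_le] at h ⊢
    linear_combination h
  have hρ : ρ + 1 ≤ q := by nlinarith [hp.two_le]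
  have hσ : σ + 1 ≤ p := by nlinarith [hq.two_le]
  have hf_class : SupportedInClass q 0 f := hf ▸ SupportedInClass.sum fun s _ =>
    ((SupportedInClass.C _).mul (SupportedInClass.X_pow _)).of_eq (by simp)
  rw [cyclotomic_eq_lamLeung hp hq hpq hu hρ hσ]
  exact height_lamLeung_mul_le ((Nat.coprime_primes hp hq).mpr hpq) hu hρ hf_class
end

section
/- For distinct primes p and q, the height of the product Φ_{pq}(x)·Φ_{q²}(x) satisfies 1 ≤ H(Φ_{pq}·Φ_{q²}) ≤ p−1. -/
/-!
`Φ_{pq} Φ_{q²} Φ_q = Φ_q(x^p) Φ_q(x^q) = ∑_{i,j<q} x^{pi+qj}`, and the exponents `pi + qj`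
are distinct. Write `k = p i_k + q j_k` with `0 ≤ i_k < q`. Dividing by `Φ_q = (1 - x^q)/(1 - x)`,
the coefficient of `x^k` in `Φ_{pq} Φ_{q²}` is `c(k) - c(k - 1)`, where
`c(k) = min(q, max(0, j_k + 1))`. Consecutive `j_k` differ by `j_1` or `j_1 + p`, where
`-p < j_1 < 0`, and clamping does not increase differences, so every coefficient has absolute
value at most `p - 1`. The product is monic, which gives the lower bound.
-/

open Polynomial

namespace CoprimeRepr

variable (p q : ℕ)

def digit (k : ℤ) : ℤ := k * p.gcdA q % q

def level (k : ℤ) : ℤ := (k - p * digit p q k) / q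

/-- The coefficient of `x^k` in the power series `Φ_q(x^p) Φ_q(x^q) / (1 - x^q)`. -/
def count (k : ℤ) : ℤ := min q (max 0 (level p q k + 1))

def quotCoeff (k : ℤ) : ℤ := count p q k - count p q (k - 1)

/-- `(1 - x)` times the series of `count`; `count` is constant for `k ≥ (p + q) q - 1`. -/
noncomputable def quotPoly : ℤ[X] :=
  ∑ k ∈ Finset.range ((p + q) * q), C (quotCoeff p q k) * X ^ k

variable {q}

lemma digit_nonneg (hq : 0 < q) (k : ℤ) : 0 ≤ digit p q k :=
  Int.emod_nonneg _ (by omega)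

lemma digit_lt (hq : 0 < q) (k : ℤ) : digit p q k < q :=
  Int.emod_lt_of_pos _ (by omega)

variable {p}

lemma mul_digit_add_mul_level (hpq : p.Coprime q) (k : ℤ) :
    p * digit p q k + q * level p q k = k := by
  have hbezout : (p : ℤ) * p.gcdA q + q * p.gcdB q = 1 := by
    rw [← Nat.gcd_eq_gcd_ab, hpq.gcd_eq_one, Nat.cast_one]
  have hdvd : (q : ℤ) ∣ k - p * digit p q k :=
    ⟨k * p.gcdB q + p * (k * p.gcdA q / q), by
      rw [digit, Int.emod_def]; linear_combination (-k) * hbezout⟩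
  rw [level, Int.mul_ediv_cancel' hdvd]
  ring

lemma eq_digit_and_eq_level (hpq : p.Coprime q) {i j k : ℤ} (hi : 0 ≤ i) (hiq : i < q)
    (h : p * i + q * j = k) : i = digit p q k ∧ j = level p q k := by
  have hq : 0 < q := by omega
  have hk := mul_digit_add_mul_level hpq k
  have hd0 := digit_nonneg p hq k
  have hdq := digit_lt p hq k
  have hdvd : (q : ℤ) ∣ p * (i - digit p q k) :=
    ⟨level p q k - j, by linear_combination h - hk⟩
  have hi_eq : i = digit p q k := by
    have := Int.eq_zero_of_abs_lt_dvd
      ((Nat.isCoprime_iff_coprime.mpr hpq.symm).dvd_of_dvd_mul_left hdvd) (by rw [abs_lt]; omega)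
    omega
  refine ⟨hi_eq, ?_⟩
  have : (q : ℤ) * j = q * level p q k := by rw [hi_eq] at h; linear_combination h - hk
  exact mul_left_cancel₀ (by positivity) this

lemma level_sub_self (hpq : p.Coprime q) (hq : 0 < q) (k : ℤ) :
    level p q (k - q) = level p q k - 1 :=
  (eq_digit_and_eq_level hpq (digit_nonneg p hq k) (digit_lt p hq k)
    (by linear_combination mul_digit_add_mul_level hpq k)).2.symm

lemma level_sub_level_sub_one (hpq : p.Coprime q) (hq : 0 < q) (k : ℤ) :
    level p q k - level p q (k - 1) = level p q 1 ∨
      level p q k - level p q (k - 1) = level p q 1 + p := by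
  have hk := mul_digit_add_mul_level hpq k
  have hk' := mul_digit_add_mul_level hpq (k - 1)
  have := digit_nonneg p hq k; have := digit_lt p hq k
  have := digit_nonneg p hq (k - 1); have := digit_lt p hq (k - 1)
  rcases le_or_gt (digit p q (k - 1)) (digit p q k) with h | h
  · left
    exact (eq_digit_and_eq_level hpq (j := level p q k - level p q (k - 1)) (k := 1)
      (sub_nonneg.mpr h) (by omega) (by linear_combination hk - hk')).2
  · right
    have := (eq_digit_and_eq_level hpq (i := digit p q k - digit p q (k - 1) + q)
      (j := level p q k - level p q (k - 1) - p) (k := 1) (by omega) (by omega)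
      (by linear_combination hk - hk')).2
    omega

lemma level_one_neg (hpq : p.Coprime q) (hp : 1 < p) (hq : 1 < q) : level p q 1 < 0 := by
  have h1 := mul_digit_add_mul_level hpq 1
  rcases (digit_nonneg p (by omega : 0 < q) 1).eq_or_lt with h | h
  · rw [← h] at h1
    have : (q : ℤ) ∣ 1 := ⟨level p q 1, by linear_combination -h1⟩
    have := Int.eq_one_of_dvd_one (by positivity) this
    omega
  · have hp' : (1 : ℤ) < p := by exact_mod_cast hp
    nlinarith

lemma neg_lt_level_one (hpq : p.Coprime q) (hq : 0 < q) : -(p : ℤ) < level p q 1 := by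
  have h1 := mul_digit_add_mul_level hpq 1
  have := digit_lt p hq 1
  have hq' : (0 : ℤ) < q := by exact_mod_cast hq
  nlinarith

lemma natAbs_quotCoeff_le (hpq : p.Coprime q) (hp : 1 < p) (hq : 1 < q) (k : ℤ) :
    (quotCoeff p q k).natAbs ≤ p - 1 := by
  have := level_one_neg hpq hp hq
  have := neg_lt_level_one hpq (by omega : 0 < q)
  rcases level_sub_level_sub_one hpq (by omega) k with h | h <;>
  · unfold quotCoeff count
    omega

lemma count_sub_count_sub_self (hpq : p.Coprime q) (hq : 0 < q) (k : ℤ) :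
    count p q k - count p q (k - q) = if 0 ≤ level p q k ∧ level p q k < q then 1 else 0 := by
  unfold count
  rw [level_sub_self hpq hq]
  split <;> omega

lemma level_neg_of_neg (hpq : p.Coprime q) (hq : 0 < q) {k : ℤ} (hk : k < 0) :
    level p q k < 0 := by
  have h := mul_digit_add_mul_level hpq k
  have := digit_nonneg p hq k
  have : (0 : ℤ) < q := by exact_mod_cast hq
  nlinarith

lemma quotCoeff_neg (hpq : p.Coprime q) (hq : 0 < q) {k : ℤ} (hk : k < 0) :
    quotCoeff p q k = 0 := by
  have := level_neg_of_neg hpq hq hk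
  have := level_neg_of_neg hpq hq (show k - 1 < 0 by omega)
  unfold quotCoeff count
  omega

lemma sub_one_le_level_of_le (hpq : p.Coprime q) (hq : 0 < q) {k : ℤ}
    (hk : ((p : ℤ) + q) * q - 1 ≤ k) :
    (q : ℤ) - 1 ≤ level p q k := by
  have h := mul_digit_add_mul_level hpq k
  have := digit_lt p hq k
  have : (0 : ℤ) < q := by exact_mod_cast hq
  nlinarith

lemma quotCoeff_eq_zero_of_le (hpq : p.Coprime q) (hq : 0 < q) {k : ℤ}
    (hk : ((p : ℤ) + q) * q ≤ k) : quotCoeff p q k = 0 := by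
  have := sub_one_le_level_of_le hpq hq (k := k) (by omega)
  have := sub_one_le_level_of_le hpq hq (k := k - 1) (by omega)
  unfold quotCoeff count
  omega

lemma coeff_quotPoly (hpq : p.Coprime q) (hq : 0 < q) (m : ℕ) :
    (quotPoly p q).coeff m = quotCoeff p q m := by
  rw [quotPoly, finsetSum_coeff]
  simp only [coeff_C_mul, coeff_X_pow, mul_ite, mul_one, mul_zero]
  rw [Finset.sum_ite_eq]
  split_ifs with h
  · rfl
  · rw [Finset.mem_range, not_lt] at h
    exact (quotCoeff_eq_zero_of_le hpq hq (by exact_mod_cast h)).symm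

lemma coeff_quotPoly_mul_X_pow (hpq : p.Coprime q) (hq : 0 < q) (m t : ℕ) :
    (quotPoly p q * X ^ t).coeff m = quotCoeff p q (m - t) := by
  rw [coeff_mul_X_pow']
  split_ifs with h
  · rw [coeff_quotPoly hpq hq, Nat.cast_sub h]
  · exact (quotCoeff_neg hpq hq (by omega)).symm

lemma coeff_quotPoly_mul_geomSum (hpq : p.Coprime q) (hq : 0 < q) (k : ℕ) :
    (quotPoly p q * ∑ t ∈ Finset.range q, X ^ t).coeff k =
      count p q k - count p q (k - q) := by
  rw [Finset.mul_sum, finsetSum_coeff]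
  simp_rw [coeff_quotPoly_mul_X_pow hpq hq]
  convert Finset.sum_range_sub' (fun t : ℕ => count p q (k - t)) q using 1
  · refine Finset.sum_congr rfl fun t _ => ?_
    rw [quotCoeff, Nat.cast_succ, sub_add_eq_sub_sub]
  · simp

lemma exists_mul_add_mul_eq_iff (hpq : p.Coprime q) (k : ℤ) :
    (∃ i < q, ∃ j < q, (p * i + q * j : ℤ) = k) ↔ 0 ≤ level p q k ∧ level p q k < q := by
  constructor
  · rintro ⟨i, hi, j, hj, h⟩
    rw [← (eq_digit_and_eq_level hpq (Nat.cast_nonneg i) (by exact_mod_cast hi) h).2]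
    exact ⟨by positivity, by exact_mod_cast hj⟩
  · rintro ⟨h0, hlt⟩
    have hq : 0 < q := by omega
    have hd0 := digit_nonneg p hq k
    have hdq := digit_lt p hq k
    refine ⟨(digit p q k).toNat, by omega, (level p q k).toNat, by omega, ?_⟩
    rw [Int.toNat_of_nonneg hd0, Int.toNat_of_nonneg h0]
    exact mul_digit_add_mul_level hpq k

lemma coeff_geomSum_mul_geomSum (hpq : p.Coprime q) (k : ℕ) :
    ((∑ i ∈ Finset.range q, X ^ (p * i)) * ∑ j ∈ Finset.range q, X ^ (q * j) : ℤ[X]).coeff k =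
      if 0 ≤ level p q k ∧ level p q k < q then 1 else 0 := by
  set f : ℕ × ℕ → ℕ := fun x => p * x.1 + q * x.2
  have hinj : Set.InjOn f ↑(Finset.range q ×ˢ Finset.range q) := by
    rintro ⟨i, j⟩ hij ⟨i', j'⟩ hij' h
    simp only [Finset.coe_product, Set.mem_prod, Finset.mem_coe, Finset.mem_range] at hij hij'
    have h' : (p * i + q * j : ℤ) = p * i' + q * j' := by exact_mod_cast h
    obtain ⟨hi, hj⟩ :=
      eq_digit_and_eq_level hpq (Nat.cast_nonneg i) (by exact_mod_cast hij.1) h'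
    obtain ⟨hi', hj'⟩ :=
      eq_digit_and_eq_level hpq (Nat.cast_nonneg i') (by exact_mod_cast hij'.1) rfl
    exact Prod.ext (by exact_mod_cast hi.trans hi'.symm) (by exact_mod_cast hj.trans hj'.symm)
  have hmem : k ∈ (Finset.range q ×ˢ Finset.range q).image f ↔
      0 ≤ level p q k ∧ level p q k < q := by
    rw [← exists_mul_add_mul_eq_iff hpq]
    simp only [Finset.mem_image, Finset.mem_product, Finset.mem_range, Prod.exists, f]
    constructor
    · rintro ⟨i, j, ⟨hi, hj⟩, h⟩
      exact ⟨i, hi, j, hj, by exact_mod_cast h⟩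
    · rintro ⟨i, hi, j, hj, h⟩
      exact ⟨i, j, ⟨hi, hj⟩, by exact_mod_cast h⟩
  rw [Finset.sum_mul_sum, ← Finset.sum_product']
  simp_rw [← pow_add]
  rw [← Finset.sum_image (f := fun n => (X : ℤ[X]) ^ n) hinj, finsetSum_coeff]
  simp only [coeff_X_pow]
  exact (Finset.sum_ite_eq _ _ _).trans (if_congr hmem rfl rfl)

lemma quotPoly_mul_geomSum (hpq : p.Coprime q) (hq : 0 < q) :
    quotPoly p q * ∑ t ∈ Finset.range q, X ^ t =
      (∑ i ∈ Finset.range q, X ^ (p * i)) * ∑ j ∈ Finset.range q, X ^ (q * j) := by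
  ext k
  rw [coeff_quotPoly_mul_geomSum hpq hq, coeff_geomSum_mul_geomSum hpq,
    count_sub_count_sub_self hpq hq]

lemma natAbs_coeff_quotPoly_le (hpq : p.Coprime q) (hp : 1 < p) (hq : 1 < q) (m : ℕ) :
    ((quotPoly p q).coeff m).natAbs ≤ p - 1 := by
  rw [coeff_quotPoly hpq (by omega)]
  exact natAbs_quotCoeff_le hpq hp hq m

end CoprimeRepr

lemma one_le_height_of_monic {f : ℤ[X]} (hf : f.Monic) : 1 ≤ Height f :=
  calc 1 = (f.coeff f.natDegree).natAbs := by rw [hf.coeff_natDegree, Int.natAbs_one]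
    _ ≤ Height f := Finset.le_sup (f := fun i => (f.coeff i).natAbs)
      (natDegree_mem_support_of_nonzero hf.ne_zero)

lemma height_le_of_forall_natAbs_coeff_le {f : ℤ[X]} {n : ℕ}
    (h : ∀ i, (f.coeff i).natAbs ≤ n) : Height f ≤ n :=
  Finset.sup_le fun i _ => h i

lemma expand_cyclotomic_prime {q : ℕ} [Fact q.Prime] (a : ℕ) :
    expand ℤ a (cyclotomic q ℤ) = ∑ i ∈ Finset.range q, X ^ (a * i) := by
  simp [cyclotomic_prime, ← pow_mul]

lemma cyclotomic_mul_mul_cyclotomic_sq_mul_cyclotomic {p q : ℕ} (hp : p.Prime) (hq : q.Prime)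
    (hpq : p ≠ q) :
    cyclotomic (p * q) ℤ * cyclotomic (q ^ 2) ℤ * cyclotomic q ℤ =
      (∑ i ∈ Finset.range q, X ^ (p * i)) * ∑ j ∈ Finset.range q, X ^ (q * j) := by
  have := Fact.mk hq
  have hndvd : ¬p ∣ q := fun h => hpq ((Nat.prime_dvd_prime_iff_eq hp hq).mp h)
  rw [← expand_cyclotomic_prime, ← expand_cyclotomic_prime,
    cyclotomic_expand_eq_cyclotomic_mul hp hndvd, cyclotomic_expand_eq_cyclotomic hq dvd_rfl,
    mul_comm q p, sq]
  ring

theorem stmt_9 (p q : ℕ) (hp : p.Prime) (hq : q.Prime) (hpq : p ≠ q) :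
    1 ≤ Height (cyclotomic (p * q) ℤ * cyclotomic (q ^ 2) ℤ) ∧
    Height (cyclotomic (p * q) ℤ * cyclotomic (q ^ 2) ℤ) ≤ p - 1 := by
  have := Fact.mk hq
  have hcop : p.Coprime q := (Nat.coprime_primes hp hq).mpr hpq
  have hquot : cyclotomic (p * q) ℤ * cyclotomic (q ^ 2) ℤ = CoprimeRepr.quotPoly p q := by
    refine mul_right_cancel₀ (cyclotomic_ne_zero q ℤ) ?_
    rw [cyclotomic_mul_mul_cyclotomic_sq_mul_cyclotomic hp hq hpq, cyclotomic_prime,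
      CoprimeRepr.quotPoly_mul_geomSum hcop hq.pos]
  refine ⟨one_le_height_of_monic ((cyclotomic.monic _ _).mul (cyclotomic.monic _ _)), ?_⟩
  rw [hquot]
  exact height_le_of_forall_natAbs_coeff_le
    (CoprimeRepr.natAbs_coeff_quotPoly_le hcop hp.one_lt hq.one_lt)
end

section
/- Let p and q be distinct primes and let g(x) = Φ_{pq}(x)·Φ_{pq²}(x)·Φ_{q³}(x) = Σ c_i x^i. If an index i satisfies i ≢ 0 (mod q²) and i ≢ 1 (mod q²), then c_i = c_{i−p}. -/
open Polynomial

theorem stmt_11 (p q : ℕ) (hp : p.Prime) (hq : q.Prime) (hpq : p ≠ q)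
    (g : Polynomial ℤ)
    (hg : g = cyclotomic (p * q) ℤ * cyclotomic (p * q ^ 2) ℤ * cyclotomic (q ^ 3) ℤ)
    (i : ℕ) (h0 : i % q ^ 2 ≠ 0) (h1 : i % q ^ 2 ≠ 1) :
    g.coeff i = if p ≤ i then g.coeff (i - p) else 0 := by
  have hqp : ¬ q ∣ p := fun h => hpq ((Nat.prime_dvd_prime_iff_eq hq hp).mp h).symm
  set E := expand ℤ (q ^ 2) (cyclotomic p ℤ * cyclotomic q ℤ) with hEdef
  -- compute E = g * Φ_p
  haveI := Fact.mk hp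
  have e1 : expand ℤ q (cyclotomic p ℤ) = cyclotomic (p * q) ℤ * cyclotomic p ℤ :=
    cyclotomic_expand_eq_cyclotomic_mul (R := ℤ) hq hqp
  have e2 : expand ℤ q (cyclotomic (p * q) ℤ) = cyclotomic (p * q ^ 2) ℤ := by
    have h := cyclotomic_expand_eq_cyclotomic (R := ℤ) (n := p * q) hq ⟨p, by ring⟩
    rwa [show p * q * q = p * q ^ 2 from by ring] at h
  have e3 : expand ℤ q (cyclotomic q ℤ) = cyclotomic (q ^ 2) ℤ := by
    have h := cyclotomic_expand_eq_cyclotomic (R := ℤ) (n := q) hq dvd_rfl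
    rwa [show q * q = q ^ 2 from by ring] at h
  have e4 : expand ℤ q (cyclotomic (q ^ 2) ℤ) = cyclotomic (q ^ 3) ℤ := by
    have h := cyclotomic_expand_eq_cyclotomic (R := ℤ) (n := q ^ 2) hq ⟨q, by ring⟩
    rwa [show q ^ 2 * q = q ^ 3 from by ring] at h
  have hEeq : E = g * cyclotomic p ℤ := by
    rw [hEdef, show q ^ 2 = q * q by ring, ← expand_expand, map_mul, e1, e3,
      map_mul, map_mul, e1, e2, e4, hg]
    ring
  -- key identity : (X^p - 1) * g = (X - 1) * E
  have hgeo : cyclotomic p ℤ * (X - 1) = X ^ p - 1 := by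
    rw [cyclotomic_prime ℤ p]
    simpa using geom_sum_mul (X : ℤ[X]) p
  have hkey : (X ^ p - 1) * g = (X - 1) * E := by
    rw [hEeq, ← hgeo]; ring
  -- coefficients of E vanish away from multiples of q²
  have hq2pos : 0 < q ^ 2 := pow_pos hq.pos 2
  have hi1 : 1 ≤ i := by
    rcases Nat.eq_zero_or_pos i with h | h
    · exact absurd (by simp [h]) h0
    · exact h
  have hEi : E.coeff i = 0 := by
    rw [hEdef, coeff_expand hq2pos, if_neg]
    intro h
    exact h0 (Nat.mod_eq_zero_of_dvd h)
  have hEi1 : E.coeff (i - 1) = 0 := by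
    rw [hEdef, coeff_expand hq2pos, if_neg]
    intro h
    apply h1
    have : (i - 1) % q ^ 2 = 0 := Nat.mod_eq_zero_of_dvd h
    have hi : i = (i - 1) + 1 := by omega
    rw [hi, Nat.add_mod, this, Nat.zero_add, Nat.mod_mod_of_dvd]
    · exact Nat.one_mod_eq_one.mpr (by nlinarith [hq.two_le])
    · exact dvd_rfl
  -- coefficient of (X - 1) * E at i
  have hrhs : ((X - 1 : ℤ[X]) * E).coeff i = 0 := by
    rw [sub_mul, one_mul, coeff_sub]
    have : ((X : ℤ[X]) * E).coeff i = E.coeff (i - 1) := by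
      conv_lhs => rw [show i = (i - 1) + 1 by omega]
      exact coeff_X_mul E (i - 1)
    rw [this, hEi1, hEi, sub_zero]
  have hlhs : ((X ^ p - 1 : ℤ[X]) * g).coeff i =
      (if p ≤ i then g.coeff (i - p) else 0) - g.coeff i := by
    rw [sub_mul, one_mul, coeff_sub, show (X : ℤ[X]) ^ p * g = g * X ^ p by ring,
      coeff_mul_X_pow']
  have := hkey ▸ hlhs
  rw [hrhs] at this
  linarith [this.symm]
end
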